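/- Let A=(S,R) be a finite argumentation network and h an assignment with t ⊨_h φ for all φ∈Δ_A. Then for every x∈S: h(x)=(⊤,⊤) if and only if h(y)=(⊥,⊥) for every y with (y,x)∈R. -/

import Mathlib

/-- The three Caminada labels. -/
inductive Label where
  | in_ : Label
  | out : Label
  | und : Label
deriving DecidableEq

/-- Propositional intuitionistic formulas over atoms `α`, with the
distinguished constant `nconst` (the paper's `n`). -/
inductive Form (α : Type) where
  | atom : α → Form α
  | nconst : Form α
  | top : Form α
  | bot : Form α
  | and : Form α → Form α → Form α
  | or : Form α → Form α → Form α
  | imp : Form α → Form α → Form α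
  | neg : Form α → Form α

/-- Forcing in the two-world Kripke model: world `false` is `t`, world `true`
is `s`, with `t < s` (i.e. the Bool order). `h` assigns to each atom its pair
of truth values (at `t`, at `s`). The constant `n` has value `(⊥,⊤)`. -/
def force {α : Type} (h : α → Bool × Bool) : Bool → Form α → Prop
  | w, .atom x => (if w then (h x).2 else (h x).1) = true
  | w, .nconst => w = true
  | _, .top => True
  | _, .bot => False
  | w, .and A B => force h w A ∧ force h w B
  | w, .or A B => force h w A ∨ force h w B
  | w, .imp A B => ∀ v : Bool, w ≤ v → force h v A → force h v B
  | w, .neg A => ∀ v : Bool, w ≤ v → ¬ force h v A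

/-- An assignment is legitimate when no atom gets the forbidden value `(⊤,⊥)`. -/
def Persistent {α : Type} (h : α → Bool × Bool) : Prop :=
  ∀ x, (h x).1 = true → (h x).2 = true

def bigAnd {α : Type} : List (Form α) → Form α
  | [] => .top
  | f :: fs => .and f (bigAnd fs)

def bigOr {α : Type} : List (Form α) → Form α
  | [] => .bot
  | f :: fs => .or f (bigOr fs)

/-- The list of attackers of `x` in the network `(α, R)`. -/
noncomputable def attackers {α : Type} [Fintype α] (R : α → α → Prop) [DecidableRel R] (x : α) : List α :=
  (Finset.univ.filter (fun y => R y x)).toList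

/-- (a1)  `x → (n ∨ ⋀_{yRx} ¬y)` -/
noncomputable def fa1 {α : Type} [Fintype α] (R : α → α → Prop) [DecidableRel R] (x : α) : Form α :=
  .imp (.atom x) (.or .nconst (bigAnd ((attackers R x).map (fun y => .neg (.atom y)))))

/-- (a2)  `(⋀_{yRx} ¬y) → (n ∨ x)` -/
noncomputable def fa2 {α : Type} [Fintype α] (R : α → α → Prop) [DecidableRel R] (x : α) : Form α :=
  .imp (bigAnd ((attackers R x).map (fun y => .neg (.atom y)))) (.or .nconst (.atom x))

/-- (b1)  `¬x → (n ∨ ⋁_{yRx} y)` -/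
noncomputable def fb1 {α : Type} [Fintype α] (R : α → α → Prop) [DecidableRel R] (x : α) : Form α :=
  .imp (.neg (.atom x)) (.or .nconst (bigOr ((attackers R x).map (fun y => .atom y))))

/-- (b2)  `(⋁_{yRx} y) → (¬x ∨ n)` -/
noncomputable def fb2 {α : Type} [Fintype α] (R : α → α → Prop) [DecidableRel R] (x : α) : Form α :=
  .imp (bigOr ((attackers R x).map (fun y => .atom y))) (.or (.neg (.atom x)) .nconst)

/-- `h` is a model of the theory `Δ_A`: every formula of `Δ_A` holds at `t`. -/
def ModelsDelta {α : Type} [Fintype α] (h : α → Bool × Bool)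
    (R : α → α → Prop) [DecidableRel R] : Prop :=
  ∀ x, force h false (fa1 R x) ∧ force h false (fa2 R x) ∧
    force h false (fb1 R x) ∧ force h false (fb2 R x)

/-- Caminada labelling / complete extension of the network `(α, R)`. -/
def IsCompleteExt {α : Type} (R : α → α → Prop) (l : α → Label) : Prop :=
  (∀ x, l x = .in_ ↔ ∀ y, R y x → l y = .out) ∧
  (∀ x, l x = .out ↔ ∃ y, R y x ∧ l y = .in_) ∧
  (∀ x, l x = .und ↔ ((∀ y, R y x → l y ≠ .in_) ∧ ∃ y, R y x ∧ l y = .und))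

/-- The labelling `λ_h` induced by an assignment `h`. -/
def lamOf {α : Type} (h : α → Bool × Bool) (x : α) : Label :=
  if h x = (true, true) then .in_ else if h x = (false, false) then .out else .und

/-- The assignment `h_λ` induced by a labelling `λ`. -/
def assignOf {α : Type} (l : α → Label) (x : α) : Bool × Bool :=
  match l x with
  | .in_ => (true, true)
  | .out => (false, false)
  | .und => (false, true)

lemma mem_attackers {α : Type} [Fintype α] (R : α → α → Prop) [DecidableRel R] {x y : α} :
    y ∈ attackers R x ↔ R y x := by
  simp [attackers]

section Forcing

variable {α : Type} (h : α → Bool × Bool)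

lemma force_false_atom {x : α} : force h false (.atom x) ↔ (h x).1 = true := by
  simp [force]

lemma force_false_nconst_or {A : Form α} : force h false (.or .nconst A) ↔ force h false A := by
  simp [force]

lemma force_mp {w : Bool} {A B : Form α} (hAB : force h w (.imp A B)) (hA : force h w A) :
    force h w B :=
  hAB w le_rfl hA

lemma force_bigAnd {w : Bool} {L : List (Form α)} :
    force h w (bigAnd L) ↔ ∀ f ∈ L, force h w f := by
  induction L with
  | nil => simp [bigAnd, force]
  | cons a l ih => simp [bigAnd, force, ih]

end Forcing

namespace Persistent

variable {α : Type} {h : α → Bool × Bool}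

lemma eq_true_true_iff (hp : Persistent h) {x : α} : h x = (true, true) ↔ (h x).1 = true := by
  have := hp x
  constructor <;> intro hx <;> simp_all [Prod.ext_iff]

lemma force_false_neg_atom_iff (hp : Persistent h) {x : α} :
    force h false (.neg (.atom x)) ↔ h x = (false, false) := by
  have := hp x
  simp only [force, Bool.forall_bool, Prod.ext_iff]
  cases (h x).1 <;> cases (h x).2 <;> simp_all

lemma force_false_bigAnd_neg_attackers_iff [Fintype α] (hp : Persistent h)
    (R : α → α → Prop) [DecidableRel R] {x : α} :
    force h false (bigAnd ((attackers R x).map fun y => .neg (.atom y))) ↔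
      ∀ y, R y x → h y = (false, false) := by
  simp [force_bigAnd, mem_attackers, hp.force_false_neg_atom_iff]

end Persistent

theorem stmt3_general {α : Type} [Fintype α] (R : α → α → Prop) [DecidableRel R]
    (h : α → Bool × Bool) (hp : Persistent h) (hm : ModelsDelta h R) :
    ∀ x, h x = (true, true) ↔ ∀ y, R y x → h y = (false, false) := by
  intro x
  obtain ⟨ha1, ha2, -, -⟩ := hm x
  rw [hp.eq_true_true_iff, ← force_false_atom, ← hp.force_false_bigAnd_neg_attackers_iff R]
  -- `n` is not forced at `t`, so (a1) and (a2) give the two directions at `t`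
  exact ⟨fun hx => (force_false_nconst_or h).1 (force_mp h ha1 hx),
    fun hc => (force_false_nconst_or h).1 (force_mp h ha2 hc)⟩

/-- In any model `h` of `Δ_A`: `h(x) = (⊤,⊤)` iff every attacker `y` of `x`
has `h(y) = (⊥,⊥)`. -/
theorem stmt3 {α : Type} [Fintype α] [Nonempty α] (R : α → α → Prop) [DecidableRel R]
    (h : α → Bool × Bool) (hp : Persistent h) (hm : ModelsDelta h R) :
    ∀ x, h x = (true, true) ↔ ∀ y, R y x → h y = (false, false) :=
  stmt3_general R h hp hm
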